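/- (Goursat for exact Mal'cev categories) Let C be an exact Mal'cev category and r ↪ x × y a relation. Let x̄ and ȳ be the images of r in x and y respectively, and let c be the pushout of r ↠ x̄ along r ↠ ȳ (the core of r). Then the pushout square (r ↠ x̄, r ↠ ȳ, x̄ ↠ c, ȳ ↠ c) is also a pullback square; in particular r ≅ x̄ ×_c ȳ, so every relation is determined by an isomorphism-free 'butterfly' of subquotients of x and y with common quotient c. -/

import Mathlib

open CategoryTheory CategoryTheory.Limits

section MalcevDefs

variable {C : Type*} [Category C] [HasFiniteLimits C]

/-- A relation on `x`, given as a jointly monic pair `p, q : R ⟶ x`, is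
reflexive if it contains the diagonal. -/
def RelReflexive {x R : C} (p q : R ⟶ x) : Prop :=
  ∃ d : x ⟶ R, d ≫ p = 𝟙 x ∧ d ≫ q = 𝟙 x

/-- A relation `p, q : R ⟶ x` is symmetric. -/
def RelSymmetric {x R : C} (p q : R ⟶ x) : Prop :=
  ∃ σ : R ⟶ R, σ ≫ p = q ∧ σ ≫ q = p

/-- A relation `p, q : R ⟶ x` is transitive: the composite relation
(obtained from the pullback `R ×_x R`) factors through `R`. -/
def RelTransitive {x R : C} (p q : R ⟶ x) : Prop :=
  ∃ t : pullback q p ⟶ R,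
    t ≫ p = pullback.fst q p ≫ p ∧ t ≫ q = pullback.snd q p ≫ q

/-- A regular category is Mal'cev if every reflexive relation is an
equivalence relation. -/
def MalcevCat (C : Type*) [Category C] [HasFiniteLimits C] : Prop :=
  ∀ {x R : C} (p q : R ⟶ x), Mono (prod.lift p q) →
    RelReflexive p q → RelSymmetric p q ∧ RelTransitive p q

/-- A regular category is exact if every equivalence relation is effective,
i.e. is the kernel pair of some morphism. -/
def ExactCat (C : Type*) [Category C] [HasFiniteLimits C] : Prop :=
  ∀ {x R : C} (p q : R ⟶ x), Mono (prod.lift p q) →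
    RelReflexive p q → RelSymmetric p q → RelTransitive p q →
    ∃ (y : C) (f : x ⟶ y), IsKernelPair f p q

end MalcevDefs

/-!
In a Mal'cev category the composite `ker ex ∘ ker ey` of the kernel pairs of the two image
projections is reflexive, hence an equivalence relation, and by exactness it is the kernel pair of
some `w : R ⟶ z`. Since `w` coequalizes both kernel pairs, it factors through the pushout `c`.
Hence a generalized element `(a, b)` of `x̄ ×_c ȳ`, lifted along `ex` and `ey` to a pair of
elements of `R` identified by `w`, lies in `ker ex ∘ ker ey`: locally it is `(ex t, ey t)` for
some `t` in `R`. So the comparison map `R ⟶ x̄ ×_c ȳ` is a strong epimorphism; it is monic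
because `R ↪ x ⨯ y` factors through it, hence it is an isomorphism.
-/

namespace CategoryTheory.Limits

variable {C : Type*} [Category C] [HasFiniteLimits C]

variable (C) in
def StrongEpiStableUnderBaseChange : Prop :=
  ∀ {X Y Z : C} (f : X ⟶ Z) (g : Y ⟶ Z), StrongEpi g → StrongEpi (pullback.fst f g)

/-- `(a, b)` lies, locally on a strong epimorphic cover `c`, in the composite relation
`ker g ∘ ker f`. -/
def LocallyInKerComp {R X Y V : C} (f : R ⟶ X) (g : R ⟶ Y) (a b : V ⟶ R) : Prop :=
  ∃ (W : C) (c : W ⟶ V) (t : W ⟶ R), StrongEpi c ∧ c ≫ a ≫ f = t ≫ f ∧ t ≫ g = c ≫ b ≫ g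

theorem mono_pullback_lift_of_mono_prod_lift {A X Y Z X' Y' : C} {f : A ⟶ X} {g : A ⟶ Y}
    {u : X ⟶ Z} {v : Y ⟶ Z} (w : f ≫ u = g ≫ v) (f' : X ⟶ X') (g' : Y ⟶ Y')
    [Mono (prod.lift (f ≫ f') (g ≫ g'))] : Mono (pullback.lift f g w) := by
  have hfac : pullback.lift f g w ≫ prod.lift (pullback.fst u v ≫ f') (pullback.snd u v ≫ g') =
      prod.lift (f ≫ f') (g ≫ g') := by
    apply Limits.prod.hom_ext <;> simp only [Category.assoc, prod.lift_fst, prod.lift_snd,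
      pullback.lift_fst_assoc, pullback.lift_snd_assoc]
  have : Mono (pullback.lift f g w ≫
      prod.lift (pullback.fst u v ≫ f') (pullback.snd u v ≫ g')) := by
    rw [hfac]; infer_instance
  exact mono_of_mono _ (prod.lift (pullback.fst u v ≫ f') (pullback.snd u v ≫ g'))

theorem exists_strongEpi_fac_jointly_mono [HasStrongEpiMonoFactorisations C] {T X Y : C}
    (a : T ⟶ X) (b : T ⟶ Y) :
    ∃ (E : C) (q : T ⟶ E) (e₁ : E ⟶ X) (e₂ : E ⟶ Y),
      StrongEpi q ∧ q ≫ e₁ = a ∧ q ≫ e₂ = b ∧ Mono (prod.lift e₁ e₂) := by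
  refine ⟨_, factorThruImage (prod.lift a b), image.ι _ ≫ prod.fst, image.ι _ ≫ prod.snd,
    inferInstance, by rw [image.fac_assoc, prod.lift_fst], by rw [image.fac_assoc, prod.lift_snd],
    ?_⟩
  rw [← prod.comp_lift, prod.lift_fst_snd, Category.comp_id]
  infer_instance

theorem exists_isKernelPair_of_relReflexive (hmal : MalcevCat C) (hexact : ExactCat C) {x R : C}
    {p q : R ⟶ x} (hpq : Mono (prod.lift p q)) (hrefl : RelReflexive p q) :
    ∃ (y : C) (f : x ⟶ y), IsKernelPair f p q :=
  hexact p q hpq hrefl (hmal p q hpq hrefl).1 (hmal p q hpq hrefl).2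

section StableStrongEpi

variable (hstab : StrongEpiStableUnderBaseChange C)
include hstab

theorem exists_cover_lift {A S T : C} (q : A ⟶ S) [StrongEpi q] (u : T ⟶ S) :
    ∃ (W : C) (c : W ⟶ T) (w : W ⟶ A), StrongEpi c ∧ w ≫ q = c ≫ u :=
  ⟨_, pullback.fst u q, pullback.snd u q, hstab u q inferInstance, pullback.condition.symm⟩

theorem exists_cover_lift_pair {A₁ A₂ S₁ S₂ T : C} (q₁ : A₁ ⟶ S₁) (q₂ : A₂ ⟶ S₂)
    [StrongEpi q₁] [StrongEpi q₂] (u₁ : T ⟶ S₁) (u₂ : T ⟶ S₂) :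
    ∃ (W : C) (c : W ⟶ T) (w₁ : W ⟶ A₁) (w₂ : W ⟶ A₂),
      StrongEpi c ∧ w₁ ≫ q₁ = c ≫ u₁ ∧ w₂ ≫ q₂ = c ≫ u₂ := by
  obtain ⟨W₁, c₁, w₁, hc₁, hw₁⟩ := exists_cover_lift hstab q₁ u₁
  obtain ⟨W, c₂, w₂, hc₂, hw₂⟩ := exists_cover_lift hstab q₂ (c₁ ≫ u₂)
  exact ⟨W, c₂ ≫ c₁, c₂ ≫ w₁, w₂, strongEpi_comp _ _, by simp [hw₁], by simp [hw₂]⟩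

theorem strongEpi_pullback_lift_of_locallyInKerComp {R X Y Z : C} {f : R ⟶ X} {g : R ⟶ Y}
    {u : X ⟶ Z} {v : Y ⟶ Z} (w : f ≫ u = g ≫ v) [StrongEpi f] [StrongEpi g]
    (H : ∀ {V : C} (a b : V ⟶ R), a ≫ f ≫ u = b ≫ g ≫ v → LocallyInKerComp f g a b) :
    StrongEpi (pullback.lift f g w) := by
  obtain ⟨W, c, a, b, hc, ha, hb⟩ :=
    exists_cover_lift_pair hstab f g (pullback.fst u v) (pullback.snd u v)
  obtain ⟨W', c', t, hc', htf, htg⟩ := H a b (by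
    rw [reassoc_of% ha, reassoc_of% hb, pullback.condition])
  have ht : t ≫ pullback.lift f g w = c' ≫ c := by
    apply pullback.hom_ext
    · simp only [Category.assoc, pullback.lift_fst, ← htf, ha]
    · simp only [Category.assoc, pullback.lift_snd, htg, hb]
  have : StrongEpi (t ≫ pullback.lift f g w) := by rw [ht]; exact strongEpi_comp _ _
  exact strongEpi_of_strongEpi t _

variable [HasStrongEpiMonoFactorisations C]

theorem exists_comp_eq_of_strongEpi {A B D : C} (e : A ⟶ B) [StrongEpi e] (d : A ⟶ D)
    (hd : ∀ {V : C} (a b : V ⟶ A), a ≫ e = b ≫ e → a ≫ d = b ≫ d) :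
    ∃ t : B ⟶ D, e ≫ t = d := by
  obtain ⟨F, q, f, n, hq, rfl, rfl, hfn⟩ := exists_strongEpi_fac_jointly_mono e d
  have : StrongEpi f := strongEpi_of_strongEpi q f
  have : Mono f := by
    refine ⟨fun {Z} α β hαβ => ?_⟩
    obtain ⟨W, c, w₁, w₂, hc, hw₁, hw₂⟩ := exists_cover_lift_pair hstab q q α β
    have hαn : c ≫ α ≫ n = c ≫ β ≫ n := by
      rw [← reassoc_of% hw₁, ← reassoc_of% hw₂]
      exact hd w₁ w₂ (by rw [reassoc_of% hw₁, reassoc_of% hw₂, hαβ])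
    rw [← cancel_mono (prod.lift f n), prod.comp_lift, prod.comp_lift, hαβ,
      (cancel_epi c).mp hαn]
  have : IsIso f := isIso_of_mono_of_strongEpi f
  exact ⟨inv f ≫ n, by rw [Category.assoc, IsIso.hom_inv_id_assoc]⟩

/-- The composite relation `ker g ∘ ker f` on `R`: the image of the object of triples
`(a, b, t)` with `f a = f t` and `g t = g b`. -/
theorem exists_relation_kerComp {R X Y : C} (f : R ⟶ X) (g : R ⟶ Y) :
    ∃ (E : C) (e₁ e₂ : E ⟶ R), Mono (prod.lift e₁ e₂) ∧
      (∀ {V : C} (a b t : V ⟶ R), a ≫ f = t ≫ f → t ≫ g = b ≫ g →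
        ∃ l : V ⟶ E, l ≫ e₁ = a ∧ l ≫ e₂ = b) ∧
      ∀ {V : C} (l : V ⟶ E), LocallyInKerComp f g (l ≫ e₁) (l ≫ e₂) := by
  set π := pullback.fst (prod.map f g) (prod.lift f g)
  set τ := pullback.snd (prod.map f g) (prod.lift f g)
  have hπf : π ≫ prod.fst ≫ f = τ ≫ f := by
    rw [← prod.map_fst f g, reassoc_of% pullback.condition, prod.lift_fst]
  have hπg : π ≫ prod.snd ≫ g = τ ≫ g := by
    rw [← prod.map_snd f g, reassoc_of% pullback.condition, prod.lift_snd]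
  obtain ⟨E, q, e₁, e₂, hq, hq₁, hq₂, hmono⟩ :=
    exists_strongEpi_fac_jointly_mono (π ≫ prod.fst) (π ≫ prod.snd)
  refine ⟨E, e₁, e₂, hmono, fun a b t haf hbg => ?_, fun l => ?_⟩
  · have hab : prod.lift a b ≫ prod.map f g = t ≫ prod.lift f g := by
      apply Limits.prod.hom_ext <;>
        simp only [Category.assoc, prod.map_fst, prod.map_snd, prod.lift_fst, prod.lift_snd,
          prod.lift_fst_assoc, prod.lift_snd_assoc, haf, hbg]
    refine ⟨pullback.lift _ _ hab ≫ q, ?_, ?_⟩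
    · rw [Category.assoc, hq₁, pullback.lift_fst_assoc, prod.lift_fst]
    · rw [Category.assoc, hq₂, pullback.lift_fst_assoc, prod.lift_snd]
  · obtain ⟨W, c, s, hc, hs⟩ := exists_cover_lift hstab q l
    refine ⟨W, c, s ≫ τ, hc, ?_, ?_⟩
    all_goals simp only [Category.assoc]
    · rw [← reassoc_of% hs, reassoc_of% hq₁, hπf]
    · rw [← reassoc_of% hs, reassoc_of% hq₂, hπg]

variable (hmal : MalcevCat C) (hexact : ExactCat C)
include hmal hexact

theorem exists_kernel_eq_kerComp {R X Y : C} (f : R ⟶ X) (g : R ⟶ Y) :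
    ∃ (z : C) (w : R ⟶ z), (∀ {V : C} (a b : V ⟶ R), a ≫ f = b ≫ f → a ≫ w = b ≫ w) ∧
      (∀ {V : C} (a b : V ⟶ R), a ≫ g = b ≫ g → a ≫ w = b ≫ w) ∧
      ∀ {V : C} (a b : V ⟶ R), a ≫ w = b ≫ w → LocallyInKerComp f g a b := by
  obtain ⟨E, e₁, e₂, hmono, hlift, hlocal⟩ := exists_relation_kerComp hstab f g
  have hcoeq {V : C} (a b t : V ⟶ R) (haf : a ≫ f = t ≫ f) (hbg : t ≫ g = b ≫ g)
      {z : C} (w : R ⟶ z) (hw : e₁ ≫ w = e₂ ≫ w) : a ≫ w = b ≫ w := by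
    obtain ⟨l, rfl, rfl⟩ := hlift a b t haf hbg
    rw [Category.assoc, Category.assoc, hw]
  obtain ⟨l, hl₁, hl₂⟩ := hlift (𝟙 R) (𝟙 R) (𝟙 R) rfl rfl
  obtain ⟨z, w, hkp⟩ := exists_isKernelPair_of_relReflexive hmal hexact hmono ⟨l, hl₁, hl₂⟩
  refine ⟨z, w, fun a b h => hcoeq a b b h rfl w hkp.w, fun a b h => hcoeq a b a rfl h w hkp.w,
    fun a b h => ?_⟩
  simpa only [hkp.lift_fst, hkp.lift_snd] using hlocal (hkp.lift a b h)

theorem locallyInKerComp_of_isPushout {R X Y Z : C} {f : R ⟶ X} {g : R ⟶ Y} {u : X ⟶ Z}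
    {v : Y ⟶ Z} [StrongEpi f] [StrongEpi g] (hpo : IsPushout f g u v) {V : C} (a b : V ⟶ R)
    (hab : a ≫ f ≫ u = b ≫ g ≫ v) : LocallyInKerComp f g a b := by
  obtain ⟨z, w, hwf, hwg, hw⟩ := exists_kernel_eq_kerComp hstab hmal hexact f g
  obtain ⟨wf, rfl⟩ := exists_comp_eq_of_strongEpi hstab f w hwf
  obtain ⟨wg, hwg'⟩ := exists_comp_eq_of_strongEpi hstab g (f ≫ wf) hwg
  set h := hpo.desc wf wg hwg'.symm
  apply hw
  calc a ≫ f ≫ wf = a ≫ f ≫ u ≫ h := by rw [hpo.inl_desc]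
    _ = b ≫ g ≫ v ≫ h := by rw [reassoc_of% hab]
    _ = b ≫ f ≫ wf := by rw [hpo.inr_desc, hwg']

end StableStrongEpi

end CategoryTheory.Limits

theorem goursat_pushout_is_pullback_general
    {C : Type*} [Category C] [HasFiniteLimits C] [HasStrongEpiMonoFactorisations C]
    (hstab : ∀ {X Y Z : C} (f : X ⟶ Z) (g : Y ⟶ Z),
      StrongEpi g → StrongEpi (pullback.fst f g))
    (hmal : MalcevCat C) (hexact : ExactCat C)
    {x y R xb yb c : C}
    (p : R ⟶ x) (q : R ⟶ y) (hmono : Mono (prod.lift p q))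
    (ex : R ⟶ xb) (mx : xb ⟶ x) (hex : StrongEpi ex)
    (hfacx : ex ≫ mx = p)
    (ey : R ⟶ yb) (my : yb ⟶ y) (hey : StrongEpi ey)
    (hfacy : ey ≫ my = q)
    (u : xb ⟶ c) (v : yb ⟶ c)
    (hpo : IsPushout ex ey u v) :
    IsPullback ex ey u v := by
  subst hfacx hfacy
  have : Mono (pullback.lift ex ey hpo.w) := mono_pullback_lift_of_mono_prod_lift hpo.w mx my
  have : StrongEpi (pullback.lift ex ey hpo.w) := strongEpi_pullback_lift_of_locallyInKerComp
    hstab hpo.w (locallyInKerComp_of_isPushout hstab hmal hexact hpo)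
  have : IsIso (pullback.lift ex ey hpo.w) := isIso_of_mono_of_strongEpi _
  exact IsPullback.of_iso_pullback ⟨hpo.w⟩ (asIso (pullback.lift ex ey hpo.w))
    (pullback.lift_fst _ _ _) (pullback.lift_snd _ _ _)

/-- (Goursat for exact Mal'cev categories.)  Let `C` be an exact Mal'cev
regular category and `r ↪ x ⨯ y` a relation, given by a jointly monic pair
`p : R ⟶ x`, `q : R ⟶ y`.  Factor `p = ex ≫ mx` and `q = ey ≫ my` through the
images `x̄`, `ȳ`, and let `c` be the pushout of `ex` along `ey` (the core of
the relation).  Then the pushout square is also a pullback square; in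
particular `R ≅ x̄ ×_c ȳ`. -/
theorem goursat_pushout_is_pullback
    {C : Type*} [Category C] [HasFiniteLimits C] [HasStrongEpiMonoFactorisations C]
    (hstab : ∀ {X Y Z : C} (f : X ⟶ Z) (g : Y ⟶ Z),
      StrongEpi g → StrongEpi (pullback.fst f g))
    (hmal : MalcevCat C) (hexact : ExactCat C)
    {x y R xb yb c : C}
    (p : R ⟶ x) (q : R ⟶ y) (hmono : Mono (prod.lift p q))
    (ex : R ⟶ xb) (mx : xb ⟶ x) (hex : StrongEpi ex) (hmx : Mono mx)
    (hfacx : ex ≫ mx = p)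
    (ey : R ⟶ yb) (my : yb ⟶ y) (hey : StrongEpi ey) (hmy : Mono my)
    (hfacy : ey ≫ my = q)
    (u : xb ⟶ c) (v : yb ⟶ c)
    (hpo : IsPushout ex ey u v) :
    IsPullback ex ey u v :=
  goursat_pushout_is_pullback_general hstab hmal hexact p q hmono ex mx hex hfacx ey my hey hfacy u
    v hpo
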